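/- (Key step of Theorem 5.3/5.5) Let G: Θ → ℝ be C² on a neighborhood U of an interior point θ* of Θ ⊂ ℝ^q, with ∇G(θ*) = 0 and ∇²G(θ*) invertible, and let G_n be C² with minimizers θ̂_n → θ*. If ∇²G_n → ∇²G uniformly on U and ‖∇G_n(θ*)‖ ≤ c a_n with a_n → 0, then ‖θ̂_n − θ*‖ = O(a_n). -/

import Mathlib

open Filter Metric Topology

/-!
Since `θ̂ₙ` minimizes `Gₙ` and eventually lies in the open set `U ⊆ Θ'`, it is a critical point:
`∇Gₙ(θ̂ₙ) = 0`. Near `θ*`, the Hessian of `G` is close to the invertible `T = ∇²G(θ*)`, and by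
uniform convergence so is the Hessian of `Gₙ` for large `n`. The mean value inequality then makes
`∇Gₙ` approximate `T` on a small ball with a constant below `1 / (2‖T⁻¹‖)`, which forces
`‖x - y‖ ≤ 2‖T⁻¹‖ ‖∇Gₙ x - ∇Gₙ y‖` there. Taking `x = θ̂ₙ`, `y = θ*` gives
`‖θ̂ₙ - θ*‖ ≤ 2‖T⁻¹‖ ‖∇Gₙ(θ*)‖ ≤ 2‖T⁻¹‖ c aₙ`.
-/

section Gradient

variable {E : Type*} [NormedAddCommGroup E] [InnerProductSpace ℝ E] [CompleteSpace E]
  {f : E → ℝ} {U : Set E} {x : E}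

theorem ContDiffOn.gradient {m n : WithTop ℕ∞} (hf : ContDiffOn ℝ n f U) (hU : IsOpen U)
    (hmn : m + 1 ≤ n) : ContDiffOn ℝ m (gradient f) U :=
  (InnerProductSpace.toDual ℝ E).symm.contDiff.comp_contDiffOn (hf.fderiv_of_isOpen hU hmn)

theorem IsLocalMin.gradient_eq_zero (h : IsLocalMin f x) : gradient f x = 0 := by
  simp [gradient, h.fderiv_eq_zero]

end Gradient

section Approximation

variable {E F : Type*} [NormedAddCommGroup E] [NormedSpace ℝ E]
  [NormedAddCommGroup F] [NormedSpace ℝ F]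

theorem Convex.approximatesLinearOn_of_norm_fderiv_sub_le {f : E → F} {φ : E →L[ℝ] F}
    {s : Set E} {c : NNReal} (hs : Convex ℝ s) (hf : ∀ x ∈ s, DifferentiableAt ℝ f x)
    (hbound : ∀ x ∈ s, ‖fderiv ℝ f x - φ‖ ≤ c) : ApproximatesLinearOn f φ s c :=
  fun _ hx _ hy => hs.norm_image_sub_le_of_norm_fderiv_le' hf hbound hy hx

theorem ApproximatesLinearOn.norm_sub_le_two_mul {f : E → F} {T : E ≃L[ℝ] F} {s : Set E}
    {c : NNReal} (hf : ApproximatesLinearOn f (T : E →L[ℝ] F) s c)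
    (hc : ‖(T.symm : F →L[ℝ] E)‖ * c ≤ 1 / 2) {x y : E} (hx : x ∈ s) (hy : y ∈ s) :
    ‖x - y‖ ≤ 2 * ‖(T.symm : F →L[ℝ] E)‖ * ‖f x - f y‖ := by
  set K := ‖(T.symm : F →L[ℝ] E)‖
  have hlin : ‖T (x - y)‖ ≤ c * ‖x - y‖ + ‖f x - f y‖ := by
    calc ‖T (x - y)‖ = ‖(f x - f y) - (f x - f y - T (x - y))‖ := by rw [sub_sub_cancel]
      _ ≤ ‖f x - f y‖ + ‖f x - f y - T (x - y)‖ := norm_sub_le _ _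
      _ ≤ ‖f x - f y‖ + c * ‖x - y‖ := add_le_add_right (hf x hx y hy) _
      _ = c * ‖x - y‖ + ‖f x - f y‖ := add_comm _ _
  have hinv : ‖x - y‖ ≤ K * ‖T (x - y)‖ := by
    simpa using (T.symm : F →L[ℝ] E).le_opNorm (T (x - y))
  have hhalf : K * c * ‖x - y‖ ≤ 1 / 2 * ‖x - y‖ := mul_le_mul_of_nonneg_right hc (norm_nonneg _)
  linarith [mul_le_mul_of_nonneg_left hlin (norm_nonneg _ : 0 ≤ K)]

theorem TendstoUniformlyOn.eventually_approximatesLinearOn_ball {ι : Type*} {l : Filter ι}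
    {g : ι → E → F} {g₀ : E → F} {U : Set E} {x₀ : E} (hU : IsOpen U) (hx₀ : x₀ ∈ U)
    (hdiff : ∀ i, DifferentiableOn ℝ (g i) U) (hcont : ContinuousAt (fderiv ℝ g₀) x₀)
    (hconv : TendstoUniformlyOn (fun i => fderiv ℝ (g i)) (fderiv ℝ g₀) l U)
    {c : NNReal} (hc : 0 < c) :
    ∃ r > 0, ball x₀ r ⊆ U ∧
      ∀ᶠ i in l, ApproximatesLinearOn (g i) (fderiv ℝ g₀ x₀) (ball x₀ r) c := by
  have hc2 : (0 : ℝ) < c / 2 := by positivity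
  have hnear : ∀ᶠ x in 𝓝 x₀, x ∈ U ∧ ‖fderiv ℝ g₀ x - fderiv ℝ g₀ x₀‖ < c / 2 := by
    filter_upwards [hU.mem_nhds hx₀, hcont (ball_mem_nhds _ hc2)] with x hxU hx
    exact ⟨hxU, by simpa [dist_eq_norm] using hx⟩
  obtain ⟨r, hr, hball⟩ := eventually_nhds_iff_ball.1 hnear
  refine ⟨r, hr, fun x hx => (hball x hx).1, ?_⟩
  filter_upwards [Metric.tendstoUniformlyOn_iff.1 hconv _ hc2] with i hi
  refine (convex_ball x₀ r).approximatesLinearOn_of_norm_fderiv_sub_le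
    (fun x hx => (hdiff i).differentiableAt (hU.mem_nhds (hball x hx).1)) fun x hx => ?_
  have hlim : ‖fderiv ℝ (g i) x - fderiv ℝ g₀ x‖ < c / 2 := by
    simpa [dist_eq_norm, norm_sub_rev] using hi x (hball x hx).1
  calc ‖fderiv ℝ (g i) x - fderiv ℝ g₀ x₀‖
      ≤ ‖fderiv ℝ (g i) x - fderiv ℝ g₀ x‖ + ‖fderiv ℝ g₀ x - fderiv ℝ g₀ x₀‖ :=
        norm_sub_le_norm_sub_add_norm_sub _ _ _
    _ ≤ c := by linarith [(hball x hx).2]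

end Approximation

theorem stmt14_general {q : ℕ} (Θ' : Set (EuclideanSpace ℝ (Fin q)))
    (G : EuclideanSpace ℝ (Fin q) → ℝ) (Gn : ℕ → EuclideanSpace ℝ (Fin q) → ℝ)
    (θstar : EuclideanSpace ℝ (Fin q))
    (U : Set (EuclideanSpace ℝ (Fin q))) (hU : IsOpen U) (hθU : θstar ∈ U) (hUΘ : U ⊆ Θ')
    (hG : ContDiffOn ℝ 2 G U) (hGn : ∀ n, ContDiffOn ℝ 2 (Gn n) U)
    (hinv : ∃ T : EuclideanSpace ℝ (Fin q) ≃L[ℝ] EuclideanSpace ℝ (Fin q),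
      (T : EuclideanSpace ℝ (Fin q) →L[ℝ] EuclideanSpace ℝ (Fin q)) =
        fderiv ℝ (gradient G) θstar)
    (θhat : ℕ → EuclideanSpace ℝ (Fin q))
    (hmin : ∀ n, ∀ θ ∈ Θ', Gn n (θhat n) ≤ Gn n θ)
    (hconv : Tendsto θhat atTop (nhds θstar))
    (hHess : TendstoUniformlyOn (fun n θ => fderiv ℝ (gradient (Gn n)) θ)
      (fun θ => fderiv ℝ (gradient G) θ) atTop U)
    (a : ℕ → ℝ)
    (c : ℝ) (hgradb : ∀ n, ‖gradient (Gn n) θstar‖ ≤ c * a n) :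
    ∃ C : ℝ, ∀ᶠ n in atTop, ‖θhat n - θstar‖ ≤ C * a n := by
  obtain ⟨T, hT⟩ := hinv
  set K := ‖(T.symm : EuclideanSpace ℝ (Fin q) →L[ℝ] EuclideanSpace ℝ (Fin q))‖
  set ε : NNReal := ⟨(2 * (K + 1))⁻¹, by positivity⟩
  have hεK : K * ε ≤ 1 / 2 := by
    change K * (2 * (K + 1))⁻¹ ≤ 1 / 2
    rw [← div_eq_mul_inv, div_le_iff₀ (by positivity)]
    linarith
  have hcont : ContinuousAt (fderiv ℝ (gradient G)) θstar :=
    ((hG.gradient hU (m := 1) le_rfl).continuousOn_fderiv_of_isOpen hU le_rfl).continuousAt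
      (hU.mem_nhds hθU)
  obtain ⟨r, hr, hrU, happrox⟩ := hHess.eventually_approximatesLinearOn_ball hU hθU
    (fun n => ((hGn n).gradient hU (m := 1) le_rfl).differentiableOn one_ne_zero) hcont
    (c := ε) (NNReal.coe_pos.1 (by positivity : (0 : ℝ) < (2 * (K + 1))⁻¹))
  refine ⟨2 * K * c, ?_⟩
  filter_upwards [happrox, hconv (ball_mem_nhds θstar hr)] with n hn hθn
  have hcrit : gradient (Gn n) (θhat n) = 0 :=
    ((isMinOn_iff.2 (hmin n)).isLocalMin (mem_of_superset (hU.mem_nhds (hrU hθn)) hUΘ)).gradient_eq_zero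
  calc ‖θhat n - θstar‖
      ≤ 2 * K * ‖gradient (Gn n) (θhat n) - gradient (Gn n) θstar‖ :=
        (hT ▸ hn).norm_sub_le_two_mul hεK hθn (mem_ball_self hr)
    _ = 2 * K * ‖gradient (Gn n) θstar‖ := by rw [hcrit, zero_sub, norm_neg]
    _ ≤ 2 * K * (c * a n) := by gcongr; exact hgradb n
    _ = 2 * K * c * a n := by ring

/-- Abstract Taylor-expansion rate argument: if `G` is `C²` near an interior minimizer
`θ*` of `Θ` with vanishing gradient and invertible Hessian, `Gₙ` are `C²` with minimizers
`θ̂ₙ → θ*`, the Hessians of `Gₙ` converge uniformly to that of `G` on `U`, and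
`‖∇Gₙ(θ*)‖ ≤ c aₙ` with `aₙ → 0`, then `‖θ̂ₙ − θ*‖ = O(aₙ)`. -/
theorem stmt14 {q : ℕ} (Θ' : Set (EuclideanSpace ℝ (Fin q)))
    (G : EuclideanSpace ℝ (Fin q) → ℝ) (Gn : ℕ → EuclideanSpace ℝ (Fin q) → ℝ)
    (θstar : EuclideanSpace ℝ (Fin q)) (hθ : θstar ∈ interior Θ')
    (U : Set (EuclideanSpace ℝ (Fin q))) (hU : IsOpen U) (hθU : θstar ∈ U) (hUΘ : U ⊆ Θ')
    (hG : ContDiffOn ℝ 2 G U) (hGn : ∀ n, ContDiffOn ℝ 2 (Gn n) U)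
    (hgrad0 : gradient G θstar = 0)
    (hinv : ∃ T : EuclideanSpace ℝ (Fin q) ≃L[ℝ] EuclideanSpace ℝ (Fin q),
      (T : EuclideanSpace ℝ (Fin q) →L[ℝ] EuclideanSpace ℝ (Fin q)) =
        fderiv ℝ (gradient G) θstar)
    (θhat : ℕ → EuclideanSpace ℝ (Fin q)) (hmem : ∀ n, θhat n ∈ Θ')
    (hmin : ∀ n, ∀ θ ∈ Θ', Gn n (θhat n) ≤ Gn n θ)
    (hconv : Tendsto θhat atTop (nhds θstar))
    (hHess : TendstoUniformlyOn (fun n θ => fderiv ℝ (gradient (Gn n)) θ)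
      (fun θ => fderiv ℝ (gradient G) θ) atTop U)
    (a : ℕ → ℝ) (ha : ∀ n, 0 ≤ a n) (ha0 : Tendsto a atTop (nhds 0))
    (c : ℝ) (hgradb : ∀ n, ‖gradient (Gn n) θstar‖ ≤ c * a n) :
    ∃ C : ℝ, ∀ᶠ n in atTop, ‖θhat n - θstar‖ ≤ C * a n :=
  stmt14_general Θ' G Gn θstar U hU hθU hUΘ hG hGn hinv θhat hmin hconv hHess a c hgradb
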